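/- arXiv:2601.06821 — 2 statements merged into one kernel-verified Lean document; each statement's English description precedes it below -/
import Mathlib

section
/- The Yang-Lee F-matrix F is η-self-adjoint (pseudo-Hermitian) but not Hermitian: Fᴴ = η F η (equivalently, the matrix η F is Hermitian), while Fᴴ ≠ F. -/
open Matrix

noncomputable section

/-- The golden ratio φ = (1+√5)/2. -/
def goldenRatio' : ℝ := (1 + Real.sqrt 5) / 2

/-- The Yang-Lee F-matrix `F = [[−φ, i√φ], [i√φ, φ]]`. -/
def YangLeeF : Matrix (Fin 2) (Fin 2) ℂ :=
  !![-(goldenRatio' : ℂ), Complex.I * (Real.sqrt goldenRatio' : ℂ);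
     Complex.I * (Real.sqrt goldenRatio' : ℂ), (goldenRatio' : ℂ)]

/-- The indefinite metric η = diag(1, −1). -/
def etaMetric : Matrix (Fin 2) (Fin 2) ℂ := !![1, 0; 0, -1]

lemma sqrtPhi_pos : 0 < Real.sqrt goldenRatio' := by
  apply Real.sqrt_pos.mpr
  have h5 : (0:ℝ) ≤ Real.sqrt 5 := Real.sqrt_nonneg 5
  unfold goldenRatio'; linarith

/-- The Yang-Lee F-matrix is η-self-adjoint (pseudo-Hermitian): `Fᴴ = η F η`,
equivalently `η F` is Hermitian, but F is not Hermitian: `Fᴴ ≠ F`. -/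
theorem yangLee_F_pseudo_hermitian_not_hermitian :
    YangLeeFᴴ = etaMetric * YangLeeF * etaMetric ∧
    (etaMetric * YangLeeF).IsHermitian ∧
    YangLeeFᴴ ≠ YangLeeF := by
  refine ⟨?_, ?_, ?_⟩
  · ext i j
    fin_cases i <;> fin_cases j <;>
      simp [YangLeeF, etaMetric, Matrix.mul_apply, Fin.sum_univ_two,
        Complex.ext_iff]
  · ext i j
    fin_cases i <;> fin_cases j <;>
      simp [YangLeeF, etaMetric, Matrix.mul_apply, Fin.sum_univ_two,
        Matrix.IsHermitian, Complex.ext_iff]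
  · intro h
    have h01 := congrFun (congrFun h 0) 1
    simp [YangLeeF, Matrix.conjTranspose_apply, Complex.ext_iff] at h01
    have := sqrtPhi_pos
    linarith [h01]
end
end

section
/- The non-unitarity of the Yang-Lee F-matrix cannot be removed by gauge (diagonal rescaling) transformations: for all nonzero complex numbers α₀, α₁, β₀, β₁, the 2×2 matrix M with entries M_{jk} = α_j F_{jk} β_k is not unitary (M Mᴴ ≠ I). -/
open Matrix

noncomputable section

/-- The non-unitarity of the Yang-Lee F-matrix cannot be removed by gauge
(diagonal rescaling) transformations: for all nonzero complex scalars
α₀, α₁, β₀, β₁, the matrix with entries M_{jk} = α_j F_{jk} β_k is not unitary. -/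
theorem yangLee_F_gauge_obstruction
    (α₀ α₁ β₀ β₁ : ℂ) (hα₀ : α₀ ≠ 0) (hα₁ : α₁ ≠ 0) (hβ₀ : β₀ ≠ 0) (hβ₁ : β₁ ≠ 0) :
    letI M : Matrix (Fin 2) (Fin 2) ℂ :=
      Matrix.of fun j k => ![α₀, α₁] j * YangLeeF j k * ![β₀, β₁] k
    M * Mᴴ ≠ 1 := by
  intro h
  have hφ : (0:ℝ) < goldenRatio' := by
    unfold goldenRatio'
    have : 0 ≤ Real.sqrt 5 := Real.sqrt_nonneg 5
    linarith
  have hs : (0:ℝ) < Real.sqrt goldenRatio' := Real.sqrt_pos.mpr hφ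
  have h01 := congrArg (fun N => N 0 1) h
  simp only [Matrix.mul_apply, Fin.sum_univ_two, Matrix.conjTranspose_apply,
    Matrix.of_apply, YangLeeF, Matrix.cons_val_zero, Matrix.cons_val_one, Matrix.head_cons,
    Matrix.cons_val', Matrix.empty_val', Matrix.cons_val_fin_one, Matrix.head_fin_const,
    Matrix.one_apply, if_neg (by decide : ¬ (0 : Fin 2) = 1),
    Complex.star_def, _root_.map_mul, Complex.conj_I, Complex.conj_ofReal] at h01
  have key : Complex.I * ((goldenRatio' : ℂ) * (Real.sqrt goldenRatio' : ℂ)) *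
      (α₀ * (starRingEnd ℂ) α₁) *
      ((Complex.normSq β₀ : ℂ) + (Complex.normSq β₁ : ℂ)) = 0 := by
    rw [← Complex.mul_conj, ← Complex.mul_conj]
    rw [← h01]; ring
  have h1 : (Complex.normSq β₀ : ℂ) + (Complex.normSq β₁ : ℂ) ≠ 0 := by
    have : (0:ℝ) < Complex.normSq β₀ + Complex.normSq β₁ := by
      have := Complex.normSq_pos.mpr hβ₀
      have := Complex.normSq_pos.mpr hβ₁
      linarith
    exact_mod_cast (by push_cast; exact_mod_cast Complex.ofReal_ne_zero.mpr (ne_of_gt this))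
  have h2 : Complex.I * ((goldenRatio' : ℂ) * (Real.sqrt goldenRatio' : ℂ)) ≠ 0 := by
    apply mul_ne_zero Complex.I_ne_zero
    apply mul_ne_zero <;> exact_mod_cast ne_of_gt (by assumption)
  exact (mul_ne_zero (mul_ne_zero h2 (mul_ne_zero hα₀ ((map_ne_zero _).mpr hα₁))) h1) key
end
end
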